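/- Let n, H ≥ 1 be natural numbers. Then there exists a natural number N = N_∞(n, H) such that for any permutations σ_1, …, σ_H of {1, …, n}, there exist subsets A_1, …, A_n of the integer interval [N] = {0, 1, …, N} ⊆ ℤ such that for each 1 ≤ h ≤ H and all 1 ≤ j, k ≤ n, one has |hA_j| < |hA_k| if and only if σ_h(j) < σ_h(k). -/

import Mathlib

/-!
Each `A_j` is a base-`c` digit sum `∑_{d<H} c^d • T_d(a_{d,j})` whose digits stay below `c` even
after taking `h`-fold sums, so `|hA_j| = ∏_d |hT_d(a_{d,j})|`. The level sets are
`T_0(a) = [0, w + a]` and `T_{d+1}(a) = {0} ∪ [x, x + w]` with `x = dw + 1 + a`: the blocks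
`[ix, i(x + w)]` making up `hT_{d+1}(a)` are pairwise disjoint for `i ≤ d + 1` and merge into one
interval from then on, so that `|hT_d(a)| = |hT_d(0)| + (h - d)a` for `a ≤ w`.
With `a_{d,j} = Q^{d+1} σ_d(j)`, at `h = r + 1` the levels `d > r` do not depend on `j`, the level
`r` separates `j` from `k` by at least `Q^{r+1}`, and the levels `d < r` move by at most `HnQ^r`,
which is negligible in the product once `Q` is large compared with the ratio `(H + 1)^2` between
the largest and smallest factor.
-/

open Pointwise Finset

theorem Int.Icc_add_Icc {a b c d : ℤ} (hab : a ≤ b) (hcd : c ≤ d) :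
    Icc a b + Icc c d = Icc (a + c) (b + d) := by
  refine (Icc_add_Icc_subset a b c d).antisymm fun z hz => ?_
  rw [mem_Icc] at hz
  exact mem_add.2 ⟨max a (z - d), by rw [mem_Icc]; omega, z - max a (z - d),
    by rw [mem_Icc]; omega, by ring⟩

theorem Int.nsmul_Icc {a b : ℤ} (hab : a ≤ b) (h : ℕ) : h • Icc a b = Icc (h * a) (h * b) := by
  induction h with
  | zero => simp [singleton_zero]
  | succ h ih =>
    rw [succ_nsmul, ih, Int.Icc_add_Icc (by gcongr) hab]
    push_cast
    ring_nf

theorem Finset.succ_nsmul_insert_zero {α : Type*} [DecidableEq α] [AddCommMonoid α]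
    (C : Finset α) (h : ℕ) : (h + 1) • insert 0 C = h • insert 0 C ∪ (h + 1) • C := by
  have add_insert_zero (X : Finset α) : X + insert 0 C = X ∪ (X + C) := by
    rw [insert_eq, add_union, singleton_zero, add_zero]
  induction h with
  | zero => rw [zero_add, one_nsmul, one_nsmul, zero_nsmul, ← singleton_zero, insert_eq]
  | succ h ih =>
    have hC : (h + 1) • C ⊆ (h + 1) • insert 0 C := nsmul_subset_nsmul_left (subset_insert 0 C)
    calc (h + 1 + 1) • insert 0 C = (h • insert 0 C ∪ (h + 1) • C) + insert 0 C := by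
          rw [succ_nsmul _ (h + 1), ih]
      _ = (h + 1) • insert 0 C ∪ ((h + 1) • C ∪ (h + 1 + 1) • C) := by
          rw [union_add, ← succ_nsmul, add_insert_zero, ← succ_nsmul]
      _ = (h + 1) • insert 0 C ∪ (h + 1 + 1) • C := by rw [← union_assoc, union_eq_left.2 hC]

noncomputable def insertZeroIcc (x w : ℕ) : Finset ℤ := insert 0 (Icc (x : ℤ) (x + w))

theorem insertZeroIcc_subset (x w : ℕ) : insertZeroIcc x w ⊆ Icc 0 (x + w) :=
  insert_subset (by simp; omega) (Icc_subset_Icc (by simp) le_rfl)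

/-- Below `h(x + w)` the new block `(h + 1) • [x, x + w]` lies in `[hx, h(x + w)]`, which is
already contained in `h • insertZeroIcc x w`; so the block only adds its part above `h(x + w)`. -/
theorem card_succ_nsmul_insertZeroIcc (x w h : ℕ) :
    #((h + 1) • insertZeroIcc x w) = #(h • insertZeroIcc x w) + min (x + w) ((h + 1) * w + 1) := by
  have hxw : (x : ℤ) ≤ x + w := by omega
  have upper : h • insertZeroIcc x w ⊆ Icc 0 (h * (x + w)) := by
    simpa [Int.nsmul_Icc (by omega : (0:ℤ) ≤ x + w)] using
      nsmul_subset_nsmul_left (n := h) (insertZeroIcc_subset x w)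
  have lower : Icc (h * x : ℤ) (h * (x + w)) ⊆ h • insertZeroIcc x w := by
    rw [← Int.nsmul_Icc hxw]
    exact nsmul_subset_nsmul_left (subset_insert _ _)
  have new_part : Icc ((h + 1 : ℕ) * x : ℤ) ((h + 1 : ℕ) * (x + w)) \ h • insertZeroIcc x w =
      Icc (max ((h + 1 : ℕ) * x : ℤ) (h * (x + w) + 1)) ((h + 1 : ℕ) * (x + w)) := by
    ext t
    simp only [mem_sdiff, mem_Icc, max_le_iff]
    constructor
    · rintro ⟨⟨hlo, hhi⟩, hnot⟩
      refine ⟨⟨hlo, not_le.1 fun ht => hnot (lower (mem_Icc.2 ⟨?_, ht⟩))⟩, hhi⟩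
      push_cast at hlo
      nlinarith
    · rintro ⟨⟨hlo, hgt⟩, hhi⟩
      exact ⟨⟨hlo, hhi⟩, fun ht => by linarith [(mem_Icc.1 (upper ht)).2]⟩
  rw [insertZeroIcc, succ_nsmul_insert_zero, ← insertZeroIcc, Int.nsmul_Icc hxw (h + 1),
    union_comm, ← card_sdiff_add_card, new_part, add_comm, Int.card_Icc]
  have e1 : ((h + 1 : ℕ) : ℤ) * (x + w) = h * x + h * w + x + w := by push_cast; ring
  have e2 : ((h + 1 : ℕ) : ℤ) * x = h * x + x := by push_cast; ring
  have e3 : (h : ℤ) * (x + w) = h * x + h * w := by ring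
  have e4 : (((h + 1) * w : ℕ) : ℤ) = h * w + w := by push_cast; ring
  rw [e1, e2, e3]
  omega

noncomputable def level (w : ℕ) : ℕ → ℕ → Finset ℤ
  | 0, a => Icc 0 (w + a)
  | d + 1, a => insertZeroIcc (d * w + 1 + a) w

theorem card_nsmul_level_zero (w a h : ℕ) : #(h • level w 0 a) = h * (w + a) + 1 := by
  rw [level, Int.nsmul_Icc (by positivity), Int.card_Icc, mul_zero, sub_zero]
  norm_cast

theorem card_nsmul_level {w a : ℕ} (ha : a ≤ w) (d h : ℕ) :
    #(h • level w d a) = #(h • level w d 0) + (h - d) * a := by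
  cases d with
  | zero =>
    rw [card_nsmul_level_zero, card_nsmul_level_zero, Nat.sub_zero]
    ring
  | succ d =>
    induction h with
    | zero => simp
    | succ h ih =>
      simp only [level] at ih ⊢
      rw [card_succ_nsmul_insertZeroIcc, card_succ_nsmul_insertZeroIcc, ih]
      rcases le_or_gt h d with hhd | hdh
      · have : (h + 1) * w ≤ d * w + w := by nlinarith
        rw [Nat.sub_eq_zero_of_le (by omega : h ≤ d + 1),
          Nat.sub_eq_zero_of_le (by omega : h + 1 ≤ d + 1)]
        omega
      · have : d * w + w + a ≤ (h + 1) * w := by nlinarith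
        rw [show h + 1 - (d + 1) = h - (d + 1) + 1 by omega, add_one_mul (h - (d + 1))]
        omega

theorem card_nsmul_level_of_le {w a b d h : ℕ} (ha : a ≤ w) (hb : b ≤ w) (hhd : h ≤ d) :
    #(h • level w d a) = #(h • level w d b) := by
  rw [card_nsmul_level ha, card_nsmul_level hb, Nat.sub_eq_zero_of_le hhd, zero_mul, zero_mul]

theorem card_succ_nsmul_level_self {w a : ℕ} (ha : a ≤ w) (d : ℕ) :
    #((d + 1) • level w d a) = #((d + 1) • level w d 0) + a := by
  rw [card_nsmul_level ha, Nat.add_sub_cancel_left, one_mul]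

theorem card_nsmul_level_le_add {w a b : ℕ} (ha : a ≤ w) (hb : b ≤ w) (d h : ℕ) :
    #(h • level w d a) ≤ #(h • level w d b) + h * a := by
  rw [card_nsmul_level ha, card_nsmul_level hb]
  have : (h - d) * a ≤ h * a := Nat.mul_le_mul_right a (Nat.sub_le h d)
  omega

theorem level_subset {w a : ℕ} (ha : a ≤ w) (d : ℕ) : level w d a ⊆ Icc 0 ((d + 2) * w + 1) := by
  cases d with
  | zero => exact Icc_subset_Icc le_rfl (by push_cast; omega)
  | succ d =>
    exact (insertZeroIcc_subset _ _).trans (Icc_subset_Icc le_rfl (by push_cast; nlinarith))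

theorem nsmul_level_subset {w a : ℕ} (ha : a ≤ w) (d h : ℕ) :
    h • level w d a ⊆ Icc 0 (h * ((d + 2) * w + 1)) := by
  simpa [Int.nsmul_Icc (by positivity : (0 : ℤ) ≤ (d + 2) * w + 1)] using
    nsmul_subset_nsmul_left (n := h) (level_subset ha d)

theorem card_nsmul_level_le {w a : ℕ} (ha : a ≤ w) (d h : ℕ) :
    #(h • level w d a) ≤ h * ((d + 2) * w + 1) + 1 := by
  have := card_le_card (nsmul_level_subset ha d h)
  rw [Int.card_Icc, sub_zero] at this
  exact_mod_cast this

theorem lt_card_nsmul_level (w d a : ℕ) {h : ℕ} (hh : h ≠ 0) : w < #(h • level w d a) := by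
  have interval : ∃ x : ℕ, Icc (x : ℤ) (x + w) ⊆ level w d a := by
    cases d with
    | zero => exact ⟨0, Icc_subset_Icc le_rfl (by simp)⟩
    | succ d => exact ⟨_, subset_insert _ _⟩
  obtain ⟨x, hx⟩ := interval
  calc w < #(Icc (x : ℤ) (x + w)) := by simp; omega
    _ ≤ #(level w d a) := card_le_card hx
    _ ≤ #(h • level w d a) := card_le_card_nsmul hh

theorem card_add_image_mul {X Y : Finset ℤ} {b : ℤ} (hX : X ⊆ Ico 0 b) :
    #(X + Y.image (b * ·)) = #X * #Y := by
  change #(image₂ (· + ·) X (Y.image (b * ·))) = _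
  rw [image₂_image_right, card_image₂_iff]
  rintro ⟨x₁, y₁⟩ h₁ ⟨x₂, y₂⟩ h₂ heq
  simp only [Set.mem_prod, mem_coe] at h₁ h₂ heq
  have digit : ∀ x ∈ X, ∀ y : ℤ, (x + b * y) % b = x := fun x hx y => by
    have := mem_Ico.1 (hX hx)
    rw [Int.add_mul_emod_self_left, Int.emod_eq_of_lt this.1 this.2]
  have hx : x₁ = x₂ := by rw [← digit x₁ h₁.1 y₁, heq, digit x₂ h₂.1 y₂]
  subst hx
  have hb : b ≠ 0 := by have := mem_Ico.1 (hX h₁.1); omega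
  simp [mul_left_cancel₀ hb (add_left_cancel heq)]

theorem add_image_mul_subset {X Y : Finset ℤ} {b c : ℤ} (hX : X ⊆ Ico 0 b) (hY : Y ⊆ Ico 0 c) :
    X + Y.image (b * ·) ⊆ Ico 0 (b * c) := by
  intro z hz
  obtain ⟨x, hx, _, hy', rfl⟩ := mem_add.1 hz
  obtain ⟨y, hy, rfl⟩ := mem_image.1 hy'
  have := mem_Ico.1 (hX hx)
  have := mem_Ico.1 (hY hy)
  rw [mem_Ico]
  constructor <;> nlinarith

noncomputable def digitSum (c : ℤ) (S : ℕ → Finset ℤ) (m : ℕ) : Finset ℤ :=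
  ∑ d ∈ range m, (S d).image (c ^ d * ·)

theorem nsmul_digitSum (c : ℤ) (S : ℕ → Finset ℤ) (m h : ℕ) :
    h • digitSum c S m = digitSum c (fun d => h • S d) m := by
  simp only [digitSum, ← sum_nsmul]
  exact sum_congr rfl fun d _ => (image_nsmul (AddMonoidHom.mulLeft (c ^ d)) (S d) h).symm

theorem digitSum_subset {c : ℤ} {S : ℕ → Finset ℤ} {m : ℕ} (hS : ∀ d < m, S d ⊆ Ico 0 c) :
    digitSum c S m ⊆ Ico 0 (c ^ m) := by
  induction m with
  | zero => simp [digitSum]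
  | succ m ih =>
    rw [digitSum, sum_range_succ, ← digitSum, pow_succ]
    exact add_image_mul_subset (ih fun d hd => hS d (by omega)) (hS m (by omega))

theorem card_digitSum {c : ℤ} {S : ℕ → Finset ℤ} {m : ℕ} (hS : ∀ d < m, S d ⊆ Ico 0 c) :
    #(digitSum c S m) = ∏ d ∈ range m, #(S d) := by
  induction m with
  | zero => simp [digitSum]
  | succ m ih =>
    have hS' : ∀ d < m, S d ⊆ Ico 0 c := fun d hd => hS d (by omega)
    rw [digitSum, sum_range_succ, ← digitSum, card_add_image_mul (digitSum_subset hS'), ih hS',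
      prod_range_succ]

/-- The factor `M` on the left avoids writing `M ^ (r - 1)`. -/
theorem mul_prod_le_mul_prod_add {u v : ℕ → ℕ} {r E M : ℕ} (hvu : ∀ d < r, v d ≤ u d + E)
    (hu : ∀ d < r, u d ≤ M) (hv : ∀ d < r, v d ≤ M) :
    M * ∏ d ∈ range r, v d ≤ M * ∏ d ∈ range r, u d + r * E * M ^ r := by
  induction r with
  | zero => simp
  | succ r ih =>
    have ih := ih (fun d hd => hvu d (by omega)) (fun d hd => hu d (by omega))
      (fun d hd => hv d (by omega))
    have hPu : ∏ d ∈ range r, u d ≤ M ^ r := by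
      simpa using prod_le_pow_card (range r) u M fun d hd => hu d (by simp at hd; omega)
    rw [prod_range_succ, prod_range_succ]
    calc M * ((∏ d ∈ range r, v d) * v r)
        ≤ (M * ∏ d ∈ range r, u d + r * E * M ^ r) * v r := by rw [← mul_assoc]; gcongr
      _ ≤ M * (∏ d ∈ range r, u d) * (u r + E) + r * E * M ^ r * M := by
          rw [add_mul]; gcongr
          · exact hvu r (by omega)
          · exact hv r (by omega)
      _ = M * ((∏ d ∈ range r, u d) * u r) + E * M * ∏ d ∈ range r, u d + r * E * M ^ (r + 1) := by
          ring
      _ ≤ M * ((∏ d ∈ range r, u d) * u r) + E * M * M ^ r + r * E * M ^ (r + 1) := by gcongr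
      _ = M * ((∏ d ∈ range r, u d) * u r) + (r + 1) * E * M ^ (r + 1) := by ring

theorem prod_lt_prod_of_lead {u v : ℕ → ℕ} {r E M w gap : ℕ} (hM : 0 < M)
    (hvu : ∀ d < r, v d ≤ u d + E) (hu : ∀ d < r, u d ≤ M) (hv : ∀ d ≤ r, v d ≤ M)
    (hw : ∀ d < r, w ≤ u d) (hgap : v r + gap ≤ u r) (hsize : r * E * M ^ r < gap * w ^ r) :
    ∏ d ∈ range (r + 1), v d < ∏ d ∈ range (r + 1), u d := by
  have hpert := mul_prod_le_mul_prod_add hvu hu fun d hd => hv d hd.le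
  have hPu : w ^ r ≤ ∏ d ∈ range r, u d := by
    simpa using pow_card_le_prod (range r) u w fun d hd => hw d (by simpa using hd)
  refine Nat.lt_of_mul_lt_mul_left (a := M) ?_
  rw [prod_range_succ, prod_range_succ]
  calc M * ((∏ d ∈ range r, v d) * v r)
      ≤ (M * ∏ d ∈ range r, u d + r * E * M ^ r) * v r := by rw [← mul_assoc]; gcongr
    _ ≤ M * (∏ d ∈ range r, u d) * v r + M * (r * E * M ^ r) := by
        rw [add_mul, mul_comm M (r * E * M ^ r)]; gcongr; exact hv r le_rfl
    _ < M * (∏ d ∈ range r, u d) * v r + M * (gap * w ^ r) := by gcongr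
    _ ≤ M * (∏ d ∈ range r, u d) * v r + M * (gap * ∏ d ∈ range r, u d) := by gcongr
    _ = M * ((∏ d ∈ range r, u d) * (v r + gap)) := by ring
    _ ≤ M * ((∏ d ∈ range r, u d) * u r) := by gcongr

section Construction

variable {n H Q w c : ℕ}

theorem pow_succ_mul_val_le (hQ : 0 < Q) (hw : n * Q ^ H < w) {d : ℕ} (hd : d < H) (i : Fin n) :
    Q ^ (d + 1) * i ≤ w :=
  calc Q ^ (d + 1) * i ≤ Q ^ H * n := Nat.mul_le_mul (Nat.pow_le_pow_right hQ hd) i.isLt.le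
    _ ≤ w := by rw [mul_comm]; exact hw.le

theorem card_nsmul_level_le_sq_mul {d h a : ℕ} (hd : d < H) (hh : h ≤ H) (ha : a ≤ w) (hw : 0 < w) :
    #(h • level w d a) ≤ (H + 1) ^ 2 * w := by
  have hdH : (d + 2) * w ≤ (H + 1) * w := Nat.mul_le_mul_right w (by omega)
  have : h * ((d + 2) * w + 1) ≤ H * ((H + 1) * w + 1) := Nat.mul_le_mul hh (by omega)
  have := card_nsmul_level_le ha d h
  nlinarith

theorem nsmul_level_subset_Ico (hc : H * ((H + 1) * w + 1) < c) {d h a : ℕ} (hd : d < H)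
    (hh : h ≤ H) (ha : a ≤ w) : h • level w d a ⊆ Ico 0 (c : ℤ) := by
  refine (nsmul_level_subset ha d h).trans (Icc_subset_Ico_right ?_)
  have : h * ((d + 2) * w + 1) ≤ H * ((H + 1) * w + 1) :=
    Nat.mul_le_mul hh (by have := Nat.mul_le_mul_right w (show d + 2 ≤ H + 1 by omega); omega)
  exact_mod_cast this.trans_lt hc

theorem mul_mul_pow_lt_pow_succ_mul_pow (hQ : H * H * n * ((H + 1) ^ 2) ^ H < Q) {r : ℕ}
    (hr : r < H) (hw : 0 < w) : r * (H * n * Q ^ r) * ((H + 1) ^ 2 * w) ^ r < Q ^ (r + 1) * w ^ r :=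
  calc r * (H * n * Q ^ r) * ((H + 1) ^ 2 * w) ^ r
        = r * H * n * ((H + 1) ^ 2) ^ r * (Q ^ r * w ^ r) := by rw [mul_pow]; ring
    _ ≤ H * H * n * ((H + 1) ^ 2) ^ H * (Q ^ r * w ^ r) := by
        gcongr ?_ * _ * _ * ?_ * _
        exact Nat.pow_le_pow_right (by positivity) hr.le
    _ < Q * (Q ^ r * w ^ r) := by
        have : 0 < Q := by omega
        gcongr
    _ = Q ^ (r + 1) * w ^ r := by ring

noncomputable def stackedLevels (Q w c H : ℕ) (τ : ℕ → Equiv.Perm (Fin n)) (j : Fin n) :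
    Finset ℤ :=
  digitSum c (fun d => level w d (Q ^ (d + 1) * τ d j)) H

variable (τ : ℕ → Equiv.Perm (Fin n))

theorem stackedLevels_subset (hQ : 0 < Q) (hw : n * Q ^ H < w)
    (hc : H * ((H + 1) * w + 1) < c) (j : Fin n) :
    stackedLevels Q w c H τ j ⊆ Ico 0 ((c : ℤ) ^ H) :=
  digitSum_subset fun d hd => by
    simpa using nsmul_level_subset_Ico hc hd (by omega : 1 ≤ H) (pow_succ_mul_val_le hQ hw hd _)

theorem card_nsmul_stackedLevels (hQ : 0 < Q) (hw : n * Q ^ H < w)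
    (hc : H * ((H + 1) * w + 1) < c) {h : ℕ} (hh : h ≤ H) (j : Fin n) :
    #(h • stackedLevels Q w c H τ j) = ∏ d ∈ range H, #(h • level w d (Q ^ (d + 1) * τ d j)) := by
  rw [stackedLevels, nsmul_digitSum, card_digitSum]
  exact fun d hd => nsmul_level_subset_Ico hc hd hh (pow_succ_mul_val_le hQ hw hd _)

theorem card_nsmul_stackedLevels_lt (hQ : H * H * n * ((H + 1) ^ 2) ^ H < Q)
    (hw : n * Q ^ H < w) (hc : H * ((H + 1) * w + 1) < c) {r : ℕ} (hr : r < H) {j k : Fin n}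
    (hjk : τ r j < τ r k) :
    #((r + 1) • stackedLevels Q w c H τ j) < #((r + 1) • stackedLevels Q w c H τ k) := by
  have hQ0 : 0 < Q := by omega
  have hw0 : 0 < w := by omega
  have hr' : r + 1 ≤ H := hr
  have ha (i : Fin n) {d : ℕ} (hd : d < H) := pow_succ_mul_val_le hQ0 hw (i := τ d i) hd
  rw [card_nsmul_stackedLevels τ hQ0 hw hc hr' j, card_nsmul_stackedLevels τ hQ0 hw hc hr' k,
    ← prod_range_mul_prod_Ico _ hr', ← prod_range_mul_prod_Ico _ hr']
  have tail : ∏ d ∈ Ico (r + 1) H, #((r + 1) • level w d (Q ^ (d + 1) * τ d j)) =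
      ∏ d ∈ Ico (r + 1) H, #((r + 1) • level w d (Q ^ (d + 1) * τ d k)) :=
    prod_congr rfl fun d hd =>
      card_nsmul_level_of_le (ha j (mem_Ico.1 hd).2) (ha k (mem_Ico.1 hd).2) (mem_Ico.1 hd).1
  rw [tail]
  refine Nat.mul_lt_mul_of_pos_right ?_
    (prod_pos fun d _ => Nat.zero_lt_of_lt (lt_card_nsmul_level _ _ _ r.add_one_ne_zero))
  refine prod_lt_prod_of_lead (E := H * n * Q ^ r) (M := (H + 1) ^ 2 * w) (w := w)
    (gap := Q ^ (r + 1)) (by positivity) (fun d hd => ?_) (fun d hd => ?_) (fun d hd => ?_)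
    (fun d _ => (lt_card_nsmul_level _ _ _ r.add_one_ne_zero).le) ?_ ?_
  · calc #((r + 1) • level w d (Q ^ (d + 1) * τ d j))
          ≤ #((r + 1) • level w d (Q ^ (d + 1) * τ d k)) + (r + 1) * (Q ^ (d + 1) * τ d j) :=
            card_nsmul_level_le_add (ha j (by omega)) (ha k (by omega)) d (r + 1)
        _ ≤ #((r + 1) • level w d (Q ^ (d + 1) * τ d k)) + H * n * Q ^ r := by
            rw [mul_assoc H, mul_comm n]
            gcongr
            · exact hd
            · exact (τ d j).isLt.le
  · exact card_nsmul_level_le_sq_mul (by omega) hr (ha k (by omega)) hw0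
  · exact card_nsmul_level_le_sq_mul (by omega) hr (ha j (by omega)) hw0
  · rw [card_succ_nsmul_level_self (ha j hr), card_succ_nsmul_level_self (ha k hr), add_assoc]
    gcongr
    calc Q ^ (r + 1) * τ r j + Q ^ (r + 1) = Q ^ (r + 1) * (τ r j + 1) := by ring
      _ ≤ Q ^ (r + 1) * τ r k := Nat.mul_le_mul_left _ hjk
  · exact mul_mul_pow_lt_pow_succ_mul_pow hQ hr hw0

theorem card_nsmul_stackedLevels_lt_iff (hQ : H * H * n * ((H + 1) ^ 2) ^ H < Q)
    (hw : n * Q ^ H < w) (hc : H * ((H + 1) * w + 1) < c) {r : ℕ} (hr : r < H) (j k : Fin n) :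
    #((r + 1) • stackedLevels Q w c H τ j) < #((r + 1) • stackedLevels Q w c H τ k) ↔
      τ r j < τ r k := by
  have hmono : StrictMono fun p => #((r + 1) • stackedLevels Q w c H τ ((τ r).symm p)) :=
    fun p q hpq => card_nsmul_stackedLevels_lt τ hQ hw hc hr (by simpa using hpq)
  simpa using hmono.lt_iff_lt (a := τ r j) (b := τ r k)

end Construction

/-- **Proposition 4 (characteristic zero).** Let `n, H ≥ 1`.  There exists
`N = N_∞(n,H)` such that for any permutations `σ_1, …, σ_H` of `{1, …, n}` there exist
subsets `A_1, …, A_n ⊆ [N] = {0, 1, …, N} ⊆ ℤ` such that for each `1 ≤ h ≤ H` the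
quantities `|hA_1|, …, |hA_n|` have the same relative order as `σ_h`. -/
theorem prop_characteristic_zero (n H : ℕ) :
    ∃ N : ℕ, ∀ σ : Fin H → Equiv.Perm (Fin n),
      ∃ A : Fin n → Finset ℤ,
        (∀ k, A k ⊆ Finset.Icc (0 : ℤ) (N : ℤ)) ∧
        ∀ h : ℕ, ∀ h1 : 1 ≤ h, ∀ hhH : h ≤ H, ∀ j k : Fin n,
          (h • A j).card < (h • A k).card ↔
            σ ⟨h - 1, by omega⟩ j < σ ⟨h - 1, by omega⟩ k := by
  set Q := H * H * n * ((H + 1) ^ 2) ^ H + 1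
  set w := n * Q ^ H + 1
  set c := H * ((H + 1) * w + 1) + 1
  have hQ : H * H * n * ((H + 1) ^ 2) ^ H < Q := Nat.lt_succ_self _
  have hw : n * Q ^ H < w := Nat.lt_succ_self _
  have hc : H * ((H + 1) * w + 1) < c := Nat.lt_succ_self _
  refine ⟨c ^ H, fun σ => ?_⟩
  let τ : ℕ → Equiv.Perm (Fin n) := fun d => if hd : d < H then σ ⟨d, hd⟩ else 1
  refine ⟨stackedLevels Q w c H τ, fun k => ?_, fun h h1 hhH j k => ?_⟩
  · push_cast
    exact (stackedLevels_subset τ (by omega) hw hc k).trans Ico_subset_Icc_self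
  · obtain ⟨r, rfl⟩ : ∃ r, h = r + 1 := ⟨h - 1, by omega⟩
    rw [card_nsmul_stackedLevels_lt_iff τ hQ hw hc hhH]
    simp only [τ, dif_pos (show r < H from hhH), Nat.add_sub_cancel]
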